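/- Fix a ∈ ℝ and b, c ∈ ℂ with b ≠ 0 and c ≠ 0, and let E ∈ ℝ. Then there exists a nonzero ℓ²-solution of the half-line eigenvalue equation if and only if |c| < 1 and E² = a² + |b|². Moreover, when |c| < 1 and E² = a² + |b|², the space Sol(a, b, c, E) is one-dimensional, spanned by the sequence ((a + E)/b)·e₁ + e₄. -/

import Mathlib

noncomputable section

open scoped ComplexConjugate

/-- The on-site matrix `V` of the local model. -/
def Vmat (a : ℝ) (b c : ℂ) : Matrix (Fin 4) (Fin 4) ℂ :=
  !![(a : ℂ), conj c, 0, conj b;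
     c, -(a : ℂ), conj b, 0;
     0, b, (a : ℂ), -c;
     b, 0, -(conj c), -(a : ℂ)]

/-- The hopping matrix `A` of the local model. -/
def Amat : Matrix (Fin 4) (Fin 4) ℂ :=
  !![0, -1, 0, 0;
     0, 0, 0, 0;
     0, 0, 0, 0;
     0, 0, 1, 0]

/-- `ψ : ℕ → (Fin 4 → ℂ)` (with `ψ n` standing for the value at the site `n + 1` of the
half-line `{1, 2, 3, …}`) solves the half-line eigenvalue equation `(H♯ − E)ψ = 0`:
`(V − E·I)ψ(1) + A*ψ(2) = 0` and `Aψ(n) + (V − E·I)ψ(n+1) + A*ψ(n+2) = 0` for all `n ≥ 1`. -/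
def IsSolSeq (a : ℝ) (b c : ℂ) (E : ℝ) (ψ : ℕ → Fin 4 → ℂ) : Prop :=
  (Vmat a b c - (E : ℂ) • 1).mulVec (ψ 0) + (Amat.conjTranspose).mulVec (ψ 1) = 0 ∧
    ∀ n : ℕ,
      Amat.mulVec (ψ n) + (Vmat a b c - (E : ℂ) • 1).mulVec (ψ (n + 1)) +
        (Amat.conjTranspose).mulVec (ψ (n + 2)) = 0

/-- The `ℓ²` condition: `∑_{n ≥ 1} ‖ψ(n)‖² < ∞`. -/
def IsL2Seq (ψ : ℕ → Fin 4 → ℂ) : Prop :=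
  Summable fun n => ∑ i, ‖ψ n i‖ ^ 2

/-- The space `Sol(a, b, c, E)` of `ℓ²`-solutions of the half-line eigenvalue equation. -/
def Sol (a : ℝ) (b c : ℂ) (E : ℝ) : Set (ℕ → Fin 4 → ℂ) :=
  {ψ | IsSolSeq a b c E ψ ∧ IsL2Seq ψ}

/-- The sequence `e₁` with `e₁(n) = (c^{n−1}, 0, 0, 0)` (convention `0⁰ = 1`). -/
def eSeq₁ (c : ℂ) : ℕ → Fin 4 → ℂ := fun n => ![c ^ n, 0, 0, 0]

/-- The sequence `e₄` with `e₄(n) = (0, 0, 0, c^{n−1})` (convention `0⁰ = 1`). -/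
def eSeq₄ (c : ℂ) : ℕ → Fin 4 → ℂ := fun n => ![0, 0, 0, c ^ n]

/-!
Write `ψ n = (x n, y n, z n, w n)`. The equation consists of forward recurrences for `x`, `w` and
backward recurrences, started from `y (-1) = z (-1) = 0`, for `y`, `z`. The combination
`m = -(a + E) y + b̄ z` satisfies `x (n + 1) = c x n + m n` and `m (n - 1) = c̄ m n + δ x n` with
`δ = E² - a² - |b|²`, and similarly for `w`. If `δ ≠ 0`, eliminating `x` leaves a second-order
recurrence for `m` whose characteristic roots have product `c / c̄` of modulus one; one root has
modulus at least one, so a decaying `m` vanishes, and then so does `x`. If `δ = 0`, then `m = 0`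
and `x n = cⁿ x 0`, which decays only if `|c| < 1`. Once `x` and `w` are known, `y` solves
`y (n - 1) = c̄ y n + s cⁿ`, so `c̄ⁿ⁺¹ y n = -s (1 + |c|² + ⋯ + |c|²ⁿ)` and, for `|c| ≤ 1`, decay
forces `s = 0` and `y = 0`; likewise for `z`, where `s = 0` reads `b x 0 = (a + E) w 0`.
-/

open Filter Topology Matrix

section Recurrence

variable {𝕜 : Type*} [NormedField 𝕜]

theorem eq_zero_of_tendsto_pow_mul {r x : 𝕜} (hr : 1 ≤ ‖r‖)
    (h : Tendsto (fun n : ℕ => r ^ n * x) atTop (𝓝 0)) : x = 0 := by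
  refine norm_le_zero_iff.1 (ge_of_tendsto' (by simpa using h.norm) fun n => ?_)
  exact le_mul_of_one_le_left (norm_nonneg x) (one_le_pow₀ hr)

theorem forall_eq_zero_of_tendsto_of_roots {r₁ r₂ : 𝕜} (hr : 1 ≤ ‖r₁‖) {v : ℕ → 𝕜}
    (h1 : v 1 = (r₁ + r₂) * v 0)
    (h2 : ∀ n, v (n + 2) = (r₁ + r₂) * v (n + 1) - r₁ * r₂ * v n)
    (hv : Tendsto v atTop (𝓝 0)) : ∀ n, v n = 0 := by
  have hr₁ : r₁ ≠ 0 := norm_pos_iff.1 (zero_lt_one.trans_le hr)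
  have hgeom : ∀ n, v (n + 1) - r₂ * v n = r₁ ^ n * (r₁ * v 0) := by
    intro n
    induction n with
    | zero => linear_combination h1
    | succ n ih => linear_combination h2 n + r₁ * ih
  have hv0 : v 0 = 0 := by
    have hdiff : Tendsto (fun n => v (n + 1) - r₂ * v n) atTop (𝓝 0) := by
      simpa using (hv.comp (tendsto_add_atTop_nat 1)).sub (hv.const_mul r₂)
    exact (mul_eq_zero.1 (eq_zero_of_tendsto_pow_mul hr (hdiff.congr hgeom))).resolve_left hr₁
  intro n
  induction n with
  | zero => exact hv0
  | succ n ih => linear_combination hgeom n + r₂ * ih + r₁ ^ n * r₁ * hv0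

end Recurrence

theorem Complex.exists_add_eq_mul_eq_one_le_norm (s p : ℂ) (hp : ‖p‖ = 1) :
    ∃ r₁ r₂ : ℂ, r₁ + r₂ = s ∧ r₁ * r₂ = p ∧ 1 ≤ ‖r₁‖ := by
  obtain ⟨d, hd⟩ := IsAlgClosed.exists_eq_mul_self (s ^ 2 - 4 * p)
  have hsum : (s + d) / 2 + (s - d) / 2 = s := by ring
  have hprod : (s + d) / 2 * ((s - d) / 2) = p := by linear_combination hd / 4
  rcases le_total 1 ‖(s + d) / 2‖ with h | h
  · exact ⟨_, _, hsum, hprod, h⟩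
  · refine ⟨_, _, (add_comm _ _).trans hsum, (mul_comm _ _).trans hprod, ?_⟩
    have hnorm := congrArg norm hprod
    rw [norm_mul, hp] at hnorm
    nlinarith [norm_nonneg ((s + d) / 2), norm_nonneg ((s - d) / 2)]

theorem forall_eq_zero_of_tendsto_of_norm_eq {α β γ : ℂ} (hα : α ≠ 0) (hγ : ‖γ‖ = ‖α‖)
    {v : ℕ → ℂ} (h1 : α * v 1 = β * v 0)
    (h2 : ∀ n, α * v (n + 2) = β * v (n + 1) - γ * v n)
    (hv : Tendsto v atTop (𝓝 0)) : ∀ n, v n = 0 := by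
  obtain ⟨r₁, r₂, hs, hp, hr⟩ := Complex.exists_add_eq_mul_eq_one_le_norm (β / α) (γ / α)
    (by rw [norm_div, hγ, div_self (norm_ne_zero_iff.2 hα)])
  refine forall_eq_zero_of_tendsto_of_roots (r₂ := r₂) hr ?_ (fun n => ?_) hv
  · rw [hs]; field_simp; linear_combination h1
  · rw [hs, hp]; field_simp; linear_combination h2 n

section BackwardRecurrence

variable {K : Type*} [Field K]

/-- `y (n - 1) = κ * y n + u n` for all `n`, with the convention `y (-1) = 0`. -/
def IsBackwardSol (κ : K) (u y : ℕ → K) : Prop :=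
  κ * y 0 + u 0 = 0 ∧ ∀ n, y n = κ * y (n + 1) + u (n + 1)

theorem IsBackwardSol.smul_add_smul {κ : K} {u₁ u₂ y₁ y₂ : ℕ → K} (h₁ : IsBackwardSol κ u₁ y₁)
    (h₂ : IsBackwardSol κ u₂ y₂) (s t : K) :
    IsBackwardSol κ (s • u₁ + t • u₂) (s • y₁ + t • y₂) := by
  refine ⟨?_, fun n => ?_⟩ <;> simp only [Pi.add_apply, Pi.smul_apply, smul_eq_mul]
  · linear_combination s * h₁.1 + t * h₂.1
  · linear_combination s * h₁.2 n + t * h₂.2 n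

theorem IsBackwardSol.eq_zero {κ : K} (hκ : κ ≠ 0) {u y : ℕ → K} (h : IsBackwardSol κ u y)
    (hu : ∀ n, u n = 0) : y = 0 := by
  funext n
  induction n with
  | zero => simpa [hu, hκ] using h.1
  | succ n ih => simpa [hu, ih, hκ, eq_comm] using h.2 n

end BackwardRecurrence

theorem IsBackwardSol.eq_zero_of_geometric {c s : ℂ} (hc : c ≠ 0) (hc1 : ‖c‖ ≤ 1) {y : ℕ → ℂ}
    (h : IsBackwardSol (conj c) (fun n => s * c ^ n) y) (hy : Tendsto y atTop (𝓝 0)) :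
    s = 0 ∧ y = 0 := by
  have hpow : ∀ n, ∃ r : ℝ, 1 ≤ r ∧ conj c ^ (n + 1) * y n = -(s * r) := by
    intro n
    induction n with
    | zero => exact ⟨1, le_rfl, by push_cast; linear_combination h.1⟩
    | succ n ih =>
      obtain ⟨r, hr, hn⟩ := ih
      refine ⟨r + (‖c‖ ^ 2) ^ (n + 1), le_add_of_le_of_nonneg hr (by positivity), ?_⟩
      push_cast
      linear_combination
        -conj c ^ (n + 1) * h.2 n + hn - s * congrArg (· ^ (n + 1)) (Complex.conj_mul' c)
  have hs : s = 0 := by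
    refine norm_le_zero_iff.1 (ge_of_tendsto' (by simpa using hy.norm) fun n => ?_)
    obtain ⟨r, hr, hn⟩ := hpow n
    calc ‖s‖ ≤ ‖s‖ * r := le_mul_of_one_le_right (norm_nonneg s) hr
      _ = ‖conj c ^ (n + 1) * y n‖ := by
        rw [hn, norm_neg, norm_mul, Complex.norm_real, Real.norm_of_nonneg (by linarith)]
      _ ≤ ‖y n‖ := by
        rw [norm_mul, norm_pow, Complex.norm_conj]
        exact mul_le_of_le_one_left (norm_nonneg _) (pow_le_one₀ (norm_nonneg _) hc1)
  exact ⟨hs, h.eq_zero (by simpa using hc) fun n => by simp [hs]⟩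

section Coupled

variable {c κ δ : ℂ} {p m : ℕ → ℂ}

theorem forall_eq_pow_mul_of_coupled (hκ : κ ≠ 0) (hp : ∀ n, p (n + 1) = c * p n + m n)
    (hm : IsBackwardSol κ (δ • p) m) (hδ : δ = 0) : ∀ n, p n = c ^ n * p 0 := by
  have hm0 := hm.eq_zero hκ fun n => by simp [hδ]
  intro n
  induction n with
  | zero => simp
  | succ n ih => rw [hp, ih, hm0, Pi.zero_apply]; ring

theorem eq_zero_of_coupled_of_ne_zero (hκ : κ ≠ 0) (hcκ : ‖c‖ = ‖κ‖) (hδ : δ ≠ 0)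
    (hp : ∀ n, p (n + 1) = c * p n + m n) (hm : IsBackwardSol κ (δ • p) m)
    (hm_lim : Tendsto m atTop (𝓝 0)) : p = 0 := by
  obtain ⟨hm₀, hm₁⟩ := hm
  simp only [Pi.smul_apply, smul_eq_mul] at hm₀ hm₁
  -- eliminating `p`: `κ m (n + 1) = (1 + c κ - δ) m n - c m (n - 1)`
  have hm_zero : ∀ n, m n = 0 :=
    forall_eq_zero_of_tendsto_of_norm_eq (β := 1 + c * κ - δ) hκ hcκ
      (by linear_combination -hm₁ 0 - δ * hp 0 - c * hm₀)
      (fun n => by linear_combination -hm₁ (n + 1) - δ * hp (n + 1) + c * hm₁ n) hm_lim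
  funext n
  refine (mul_eq_zero.1 ?_).resolve_left hδ
  cases n with
  | zero => linear_combination hm₀ - κ * hm_zero 0
  | succ n => linear_combination -hm₁ n + hm_zero n - κ * hm_zero (n + 1)

theorem eq_zero_of_coupled (hκ : κ ≠ 0) (hcκ : ‖c‖ = ‖κ‖) (h : δ ≠ 0 ∨ 1 ≤ ‖c‖)
    (hp : ∀ n, p (n + 1) = c * p n + m n) (hm : IsBackwardSol κ (δ • p) m)
    (hp_lim : Tendsto p atTop (𝓝 0)) (hm_lim : Tendsto m atTop (𝓝 0)) : p = 0 := by
  by_cases hδ : δ = 0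
  · have hgeom := forall_eq_pow_mul_of_coupled hκ hp hm hδ
    have hp0 := eq_zero_of_tendsto_pow_mul (h.resolve_left (not_not.2 hδ)) (hp_lim.congr hgeom)
    funext n
    rw [hgeom, hp0, mul_zero, Pi.zero_apply]
  · exact eq_zero_of_coupled_of_ne_zero hκ hcκ hδ hp hm hm_lim

end Coupled

theorem IsL2Seq.tendsto_apply {ψ : ℕ → Fin 4 → ℂ} (h : IsL2Seq ψ) (i : Fin 4) :
    Tendsto (fun n => ψ n i) atTop (𝓝 0) := by
  have hsq : Tendsto (fun n => ‖ψ n i‖ ^ 2) atTop (𝓝 0) :=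
    (h.of_nonneg_of_le (fun n => by positivity) fun n =>
      Finset.single_le_sum (fun j _ => by positivity) (Finset.mem_univ i)).tendsto_atTop_zero
  rw [tendsto_zero_iff_norm_tendsto_zero]
  simpa using hsq.sqrt

theorem Vmat_sub_smul_one_mulVec (a : ℝ) (b c : ℂ) (E : ℝ) (v : Fin 4 → ℂ) :
    (Vmat a b c - (E : ℂ) • 1) *ᵥ v =
      ![(a - E) * v 0 + conj c * v 1 + conj b * v 3, c * v 0 - (a + E) * v 1 + conj b * v 2,
        b * v 1 + (a - E) * v 2 - c * v 3, b * v 0 - conj c * v 2 - (a + E) * v 3] := by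
  ext i; fin_cases i <;> simp [Vmat, mulVec, dotProduct, Fin.sum_univ_four] <;> ring

theorem Amat_mulVec (v : Fin 4 → ℂ) : Amat *ᵥ v = ![-v 1, 0, 0, v 2] := by
  ext i; fin_cases i <;> simp [Amat, mulVec, dotProduct, Fin.sum_univ_four]

theorem Amat_conjTranspose_mulVec (v : Fin 4 → ℂ) : Amatᴴ *ᵥ v = ![0, -v 0, v 3, 0] := by
  ext i; fin_cases i <;> simp [Amat, mulVec, dotProduct, Fin.sum_univ_four, conjTranspose_apply]

/-- The determinant of the block of `V − E` on the first and last coordinates. -/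
def cornerDet (a : ℝ) (b : ℂ) (E : ℝ) : ℂ := (a - E) * (-a - E) - conj b * b

theorem cornerDet_eq_zero_iff {a : ℝ} {b : ℂ} {E : ℝ} :
    cornerDet a b E = 0 ↔ E ^ 2 = a ^ 2 + ‖b‖ ^ 2 := by
  have h : cornerDet a b E = ((E ^ 2 - (a ^ 2 + ‖b‖ ^ 2) : ℝ) : ℂ) := by
    rw [cornerDet, Complex.conj_mul']; push_cast; ring
  rw [h, Complex.ofReal_eq_zero, sub_eq_zero]

theorem smul_eSeq_apply (z l c : ℂ) (n : ℕ) :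
    (z • (l • eSeq₁ c + eSeq₄ c)) n = ![z * (l * c ^ n), 0, 0, z * c ^ n] := by
  ext i; fin_cases i <;> simp [eSeq₁, eSeq₄]

section Model

variable {a : ℝ} {b c : ℂ} {E : ℝ} {ψ : ℕ → Fin 4 → ℂ}

theorem isSolSeq_iff :
    IsSolSeq a b c E ψ ↔
      (∀ n, ψ (n + 1) 0 = c * ψ n 0 + (-(a + E) * ψ n 1 + conj b * ψ n 2)) ∧
      (∀ n, ψ (n + 1) 3 = c * ψ n 3 + (-b * ψ n 1 - (a - E) * ψ n 2)) ∧
      IsBackwardSol (conj c) (fun n => (a - E) * ψ n 0 + conj b * ψ n 3) (ψ · 1) ∧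
      IsBackwardSol (conj c) (fun n => -b * ψ n 0 + (a + E) * ψ n 3) (ψ · 2) := by
  rw [← Nat.and_forall_add_one (p := fun n => ψ (n + 1) 0 = _),
    ← Nat.and_forall_add_one (p := fun n => ψ (n + 1) 3 = _)]
  simp only [IsSolSeq, IsBackwardSol, Vmat_sub_smul_one_mulVec, Amat_mulVec,
    Amat_conjTranspose_mulVec, funext_iff, Fin.forall_fin_succ, forall_and, Pi.add_apply,
    Pi.zero_apply, cons_val_zero, cons_val_succ, IsEmpty.forall_iff, and_true]
  constructor
  · rintro ⟨⟨h0, h1, h2, h3⟩, hy, hx, hw, hz⟩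
    exact ⟨⟨by linear_combination -h1, fun n => by linear_combination -hx n⟩,
      ⟨by linear_combination h2, fun n => by linear_combination hw n⟩,
      ⟨by linear_combination h0, fun n => by linear_combination -hy n⟩,
      by linear_combination -h3, fun n => by linear_combination hz n⟩
  · rintro ⟨⟨hx0, hx⟩, ⟨hw0, hw⟩, ⟨hy0, hy⟩, hz0, hz⟩
    exact ⟨⟨by linear_combination hy0, by linear_combination -hx0, by linear_combination hw0,
      by linear_combination -hz0⟩, fun n => by linear_combination -hy n,
      fun n => by linear_combination -hx n, fun n => by linear_combination hw n,
      fun n => by linear_combination hz n⟩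

theorem IsSolSeq.isBackwardSol_cornerDet (h : IsSolSeq a b c E ψ) :
    IsBackwardSol (conj c) (cornerDet a b E • (ψ · 0))
        (fun n => -(a + E) * ψ n 1 + conj b * ψ n 2) ∧
      IsBackwardSol (conj c) (cornerDet a b E • (ψ · 3))
        (fun n => -b * ψ n 1 - (a - E) * ψ n 2) := by
  obtain ⟨-, -, hy, hz⟩ := isSolSeq_iff.1 h
  constructor
  · convert hy.smul_add_smul hz (-(a + E)) (conj b) using 1
    · funext n; simp only [cornerDet, Pi.add_apply, Pi.smul_apply, smul_eq_mul]; ring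
    · funext n; simp only [Pi.add_apply, Pi.smul_apply, smul_eq_mul]
  · convert hy.smul_add_smul hz (-b) (-(a - E)) using 1
    · funext n; simp only [cornerDet, Pi.add_apply, Pi.smul_apply, smul_eq_mul]; ring
    · funext n; simp only [Pi.add_apply, Pi.smul_apply, smul_eq_mul]; ring

theorem eq_zero_of_mem_Sol (hc : c ≠ 0) (h : cornerDet a b E ≠ 0 ∨ 1 ≤ ‖c‖)
    (hψ : ψ ∈ Sol a b c E) : ψ = 0 := by
  obtain ⟨hx, hw, hy, hz⟩ := isSolSeq_iff.1 hψ.1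
  obtain ⟨hm₁, hm₂⟩ := hψ.1.isBackwardSol_cornerDet
  have hlim := hψ.2.tendsto_apply
  have hcc : conj c ≠ 0 := by simpa using hc
  have hcc' : ‖c‖ = ‖conj c‖ := (Complex.norm_conj c).symm
  have hx0 : (ψ · 0) = 0 := eq_zero_of_coupled hcc hcc' h hx hm₁ (hlim 0)
    (by simpa using ((hlim 1).const_mul _).add ((hlim 2).const_mul _))
  have hw0 : (ψ · 3) = 0 := eq_zero_of_coupled hcc hcc' h hw hm₂ (hlim 3)
    (by simpa using ((hlim 1).const_mul (-b)).sub ((hlim 2).const_mul (a - E : ℂ)))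
  have hy0 : (ψ · 1) = 0 := hy.eq_zero hcc fun n => by simp [congrFun hx0 n, congrFun hw0 n]
  have hz0 : (ψ · 2) = 0 := hz.eq_zero hcc fun n => by simp [congrFun hx0 n, congrFun hw0 n]
  funext n i
  fin_cases i
  exacts [congrFun hx0 n, congrFun hy0 n, congrFun hz0 n, congrFun hw0 n]

theorem exists_eq_smul_of_mem_Sol (hb : b ≠ 0) (hc : c ≠ 0) (hc1 : ‖c‖ < 1)
    (hE : cornerDet a b E = 0) (hψ : ψ ∈ Sol a b c E) :
    ∃ z : ℂ, ψ = z • ((((a : ℂ) + (E : ℂ)) / b) • eSeq₁ c + eSeq₄ c) := by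
  obtain ⟨hx, hw, hy, hz⟩ := isSolSeq_iff.1 hψ.1
  obtain ⟨hm₁, hm₂⟩ := hψ.1.isBackwardSol_cornerDet
  have hlim := hψ.2.tendsto_apply
  have hcc : conj c ≠ 0 := by simpa using hc
  have hx' := forall_eq_pow_mul_of_coupled hcc hx hm₁ hE
  have hw' := forall_eq_pow_mul_of_coupled hcc hw hm₂ hE
  have hy' : IsBackwardSol (conj c)
      (fun n => ((a - E) * ψ 0 0 + conj b * ψ 0 3) * c ^ n) (ψ · 1) := by
    convert hy using 2 with n
    rw [hx' n, hw' n]; ring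
  have hz' : IsBackwardSol (conj c)
      (fun n => (-b * ψ 0 0 + (a + E) * ψ 0 3) * c ^ n) (ψ · 2) := by
    convert hz using 2 with n
    rw [hx' n, hw' n]; ring
  obtain ⟨-, hy0⟩ := hy'.eq_zero_of_geometric hc hc1.le (hlim 1)
  obtain ⟨hs, hz0⟩ := hz'.eq_zero_of_geometric hc hc1.le (hlim 2)
  have hx00 : ψ 0 0 = (a + E) / b * ψ 0 3 := by
    rw [div_mul_eq_mul_div, eq_div_iff hb]; linear_combination -hs
  refine ⟨ψ 0 3, funext fun n => ?_⟩
  rw [smul_eSeq_apply]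
  ext i; fin_cases i
  · show ψ n 0 = ψ 0 3 * ((a + E) / b * c ^ n)
    rw [hx' n, hx00]; ring
  · exact congrFun hy0 n
  · exact congrFun hz0 n
  · show ψ n 3 = ψ 0 3 * c ^ n
    rw [hw' n]; ring

theorem smul_mem_Sol (hb : b ≠ 0) (hc1 : ‖c‖ < 1) (hE : cornerDet a b E = 0) (z : ℂ) :
    z • ((((a : ℂ) + (E : ℂ)) / b) • eSeq₁ c + eSeq₄ c) ∈ Sol a b c E := by
  set l := ((a : ℂ) + E) / b
  have hl : b * l = a + E := mul_div_cancel₀ _ hb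
  have hl' : (a - E) * l + conj b = 0 := by
    refine (mul_eq_zero.1 ?_).resolve_left hb
    rw [cornerDet] at hE
    linear_combination (a - E : ℂ) * hl - hE
  constructor
  · rw [isSolSeq_iff]
    simp only [smul_eSeq_apply, IsBackwardSol, cons_val_zero, cons_val_one, cons_val]
    exact ⟨fun n => by ring, fun n => by ring,
      ⟨by linear_combination z * hl', fun n => by linear_combination -(z * c ^ (n + 1)) * hl'⟩,
      by linear_combination -z * hl, fun n => by linear_combination z * c ^ (n + 1) * hl⟩
  · have hc2 : ‖c‖ ^ 2 < 1 := pow_lt_one₀ (norm_nonneg c) hc1 two_ne_zero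
    refine ((summable_geometric_of_lt_one (by positivity) hc2).mul_left
      (‖z * l‖ ^ 2 + ‖z‖ ^ 2)).congr fun n => ?_
    rw [Fin.sum_univ_four, smul_eSeq_apply]
    show _ = ‖z * (l * c ^ n)‖ ^ 2 + ‖(0 : ℂ)‖ ^ 2 + ‖(0 : ℂ)‖ ^ 2 + ‖z * c ^ n‖ ^ 2
    simp only [norm_mul, norm_pow, norm_zero]
    ring

end Model

/-- Fix `a ∈ ℝ` and `b, c ∈ ℂ` with `b ≠ 0` and `c ≠ 0`, and let `E ∈ ℝ`. Then there
exists a nonzero ℓ²-solution of the half-line eigenvalue equation iff `|c| < 1` and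
`E² = a² + |b|²`. Moreover, in that case `Sol(a,b,c,E)` is one-dimensional, spanned by
`((a+E)/b)·e₁ + e₄`. -/
theorem stmt13 (a : ℝ) (b c : ℂ) (hb : b ≠ 0) (hc : c ≠ 0) (E : ℝ) :
    ((∃ ψ ∈ Sol a b c E, ψ ≠ 0) ↔ (‖c‖ < 1 ∧ E ^ 2 = a ^ 2 + ‖b‖ ^ 2)) ∧
    (‖c‖ < 1 → E ^ 2 = a ^ 2 + ‖b‖ ^ 2 →
      Sol a b c E =
        {ψ | ∃ z : ℂ, ψ = z • ((((a : ℂ) + (E : ℂ)) / b) • eSeq₁ c + eSeq₄ c)}) := by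
  refine ⟨⟨fun ⟨ψ, hψ, hne⟩ => ?_, fun ⟨hc1, hE⟩ => ?_⟩, fun hc1 hE => ?_⟩
  · by_contra h
    refine hne (eq_zero_of_mem_Sol hc ?_ hψ)
    by_contra! h'
    exact h ⟨h'.2, cornerDet_eq_zero_iff.1 h'.1⟩
  · refine ⟨_, smul_mem_Sol hb hc1 (cornerDet_eq_zero_iff.2 hE) 1, fun h => ?_⟩
    simpa [eSeq₁, eSeq₄] using congrFun (congrFun h 0) 3
  · ext ψ
    exact ⟨exists_eq_smul_of_mem_Sol hb hc hc1 (cornerDet_eq_zero_iff.2 hE),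
      fun ⟨z, hz⟩ => hz ▸ smul_mem_Sol hb hc1 (cornerDet_eq_zero_iff.2 hE) z⟩
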